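/- arXiv:1801.08757 — 4 statements merged into one kernel-verified Lean document; each statement's English description precedes it below -/
import Mathlib

section
/- Let E be a real inner product space, μ ∈ E, K a natural number, and for each i ∈ Fin K let g i ∈ E, c i ∈ ℝ and C i ∈ ℝ. Suppose a* ∈ E and λ* : Fin K → ℝ satisfy: (primal feasibility) c i + ⟪g i, a*⟫ ≤ C i for all i; (dual feasibility) λ* i ≥ 0 for all i; (stationarity) a* − μ + Σ_{i} λ* i • g i = 0; and (complementary slackness) λ* i · (c i + ⟪g i, a*⟫ − C i) = 0 for all i. Suppose moreover that there is an index i₀ with g i₀ ≠ 0, λ* i₀ > 0, and λ* i = 0 for every i ≠ i₀. Then λ* i₀ = (⟪g i₀, μ⟫ + c i₀ − C i₀) / ‖g i₀‖² = max 0 ((⟪g i₀, μ⟫ + c i₀ − C i₀) / ‖g i₀‖²), and a* = μ − λ* i₀ • g i₀. -/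
open scoped RealInnerProductSpace

/-- 'Exactly one active constraint' case of Proposition 1: under the KKT conditions
for the safety-layer QP, if exactly one multiplier is positive (with nonzero gradient),
the multiplier and the optimal action are given by the closed-form expressions. -/
theorem safety_layer_one_active_constraint
    {E : Type*} [NormedAddCommGroup E] [InnerProductSpace ℝ E]
    (μ : E) (K : ℕ) (g : Fin K → E) (c C : Fin K → ℝ)
    (astar : E) (lamstar : Fin K → ℝ)
    (primal : ∀ i, c i + ⟪g i, astar⟫ ≤ C i)
    (dual : ∀ i, 0 ≤ lamstar i)
    (stationarity : astar - μ + ∑ i, lamstar i • g i = 0)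
    (compSlack : ∀ i, lamstar i * (c i + ⟪g i, astar⟫ - C i) = 0)
    (i₀ : Fin K) (hg : g i₀ ≠ 0) (hpos : 0 < lamstar i₀)
    (hinactive : ∀ i, i ≠ i₀ → lamstar i = 0) :
    lamstar i₀ = (⟪g i₀, μ⟫ + c i₀ - C i₀) / ‖g i₀‖ ^ 2 ∧
    lamstar i₀ = max 0 ((⟪g i₀, μ⟫ + c i₀ - C i₀) / ‖g i₀‖ ^ 2) ∧
    astar = μ - lamstar i₀ • g i₀ := by
  have hsum : ∑ i, lamstar i • g i = lamstar i₀ • g i₀ := by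
    rw [Finset.sum_eq_single i₀]
    · intro b _ hb; rw [hinactive b hb, zero_smul]
    · intro h; exact absurd (Finset.mem_univ i₀) h
  have hast : astar = μ - lamstar i₀ • g i₀ := by
    rw [hsum] at stationarity
    have := stationarity
    abel_nf at this ⊢
    linear_combination (norm := abel_nf) this
  have hactive : c i₀ + ⟪g i₀, astar⟫ = C i₀ := by
    have h := compSlack i₀
    rcases mul_eq_zero.1 h with h1 | h2
    · exact absurd h1 (ne_of_gt hpos)
    · linarith
  have hnorm : (0:ℝ) < ‖g i₀‖ ^ 2 := by have := norm_pos_iff.2 hg; positivity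
  have hinner : ⟪g i₀, astar⟫ = ⟪g i₀, μ⟫ - lamstar i₀ * ‖g i₀‖ ^ 2 := by
    rw [hast, inner_sub_right, inner_smul_right, real_inner_self_eq_norm_sq]
  have hlam : lamstar i₀ = (⟪g i₀, μ⟫ + c i₀ - C i₀) / ‖g i₀‖ ^ 2 := by
    field_simp
    linarith [hactive, hinner]
  refine ⟨hlam, ?_, hast⟩
  rw [← hlam, max_eq_right hpos.le]
end

section
/- Let E be a real inner product space, μ ∈ E, g ∈ E with g ≠ 0, and c, C ∈ ℝ. Define λ* = max 0 ((⟪g, μ⟫ + c − C) / ‖g‖²) and a* = μ − λ* • g. Then a* satisfies c + ⟪g, a*⟫ ≤ C, and for every a ∈ E with c + ⟪g, a⟫ ≤ C one has ‖a* − μ‖ ≤ ‖a − μ‖, with equality only if a = a*. In other words, a* is the unique point of the halfspace {a : c + ⟪g, a⟫ ≤ C} closest to μ. -/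
open scoped RealInnerProductSpace

/-- The closed-form safety-layer action is the unique point of the halfspace
{a : c + ⟪g, a⟫ ≤ C} closest to μ. -/
theorem safety_layer_closed_form_unique_projection
    {E : Type*} [NormedAddCommGroup E] [InnerProductSpace ℝ E]
    (μ g : E) (hg : g ≠ 0) (c C : ℝ) :
    let lamstar := max 0 ((⟪g, μ⟫ + c - C) / ‖g‖ ^ 2)
    let astar := μ - lamstar • g
    c + ⟪g, astar⟫ ≤ C ∧
    ∀ a : E, c + ⟪g, a⟫ ≤ C →
      ‖astar - μ‖ ≤ ‖a - μ‖ ∧ (‖astar - μ‖ = ‖a - μ‖ → a = astar) := by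
  intro lamstar astar
  have hgn : (0:ℝ) < ‖g‖ := norm_pos_iff.mpr hg
  have hg2 : (0:ℝ) < ‖g‖ ^ 2 := by positivity
  have hinner : ⟪g, astar⟫ = ⟪g, μ⟫ - lamstar * ‖g‖ ^ 2 := by
    simp [astar, inner_sub_right, inner_smul_right, real_inner_self_eq_norm_sq,
      mul_comm]
  by_cases h : ⟪g, μ⟫ + c - C ≤ 0
  · have hl : lamstar = 0 := by
      simp only [lamstar, max_eq_left_iff]
      exact div_nonpos_of_nonpos_of_nonneg h (le_of_lt hg2)
    have hast : astar = μ := by simp [astar, hl]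
    refine ⟨by rw [hast]; linarith, fun a ha => ?_⟩
    constructor
    · rw [hast]; simp
    · intro heq
      rw [hast] at heq ⊢
      simp only [sub_self, norm_zero] at heq
      have := norm_eq_zero.mp heq.symm
      have : a = μ := by
        have := sub_eq_zero.mp this
        exact this
      exact this
  · push_neg at h
    have hl : lamstar = (⟪g, μ⟫ + c - C) / ‖g‖ ^ 2 := by
      simp only [lamstar, max_eq_right_iff]
      positivity
    have hlpos : 0 < lamstar := by rw [hl]; positivity
    have hlval : lamstar * ‖g‖ ^ 2 = ⟪g, μ⟫ + c - C := by
      rw [hl, div_mul_cancel₀ _ (ne_of_gt hg2)]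
    have hnast : ‖astar - μ‖ = lamstar * ‖g‖ := by
      have : astar - μ = -(lamstar • g) := by simp [astar]
      rw [this, norm_neg, norm_smul, Real.norm_of_nonneg hlpos.le]
    refine ⟨by rw [hinner, hlval]; ring_nf; linarith, fun a ha => ?_⟩
    have key : lamstar * ‖g‖ ^ 2 ≤ ⟪g, μ - a⟫ := by
      rw [hlval, inner_sub_right]; linarith
    have cs : ⟪g, μ - a⟫ ≤ ‖g‖ * ‖μ - a‖ := real_inner_le_norm g (μ - a)
    have hle : lamstar * ‖g‖ ≤ ‖μ - a‖ := by
      have h1 : lamstar * ‖g‖ ^ 2 ≤ ‖g‖ * ‖μ - a‖ := le_trans key cs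
      nlinarith
    constructor
    · rw [hnast, norm_sub_rev]; exact hle
    · intro heq
      have hna : ‖μ - a‖ = lamstar * ‖g‖ := by
        rw [← norm_neg, neg_sub, ← heq, hnast]
      have hcseq : ⟪g, μ - a⟫ = ‖g‖ * ‖μ - a‖ := by
        have : ‖g‖ * ‖μ - a‖ = lamstar * ‖g‖ ^ 2 := by rw [hna]; ring
        rw [this]
        exact le_antisymm (by rw [← this]; exact cs) key
      have := (inner_eq_norm_mul_iff_real (x := g) (y := μ - a)).mp hcseq
      -- this : ‖μ - a‖ • g = ‖g‖ • (μ - a)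
      have hma : μ - a = lamstar • g := by
        have h2 : ‖g‖ • (μ - a) = (lamstar * ‖g‖) • g := by
          rw [← this, hna]
        have h3 : (lamstar * ‖g‖) • g = ‖g‖ • (lamstar • g) := by
          rw [smul_smul, mul_comm]
        rw [h3] at h2
        exact smul_right_injective E (ne_of_gt hgn) h2
      have : a = μ - lamstar • g := by
        rw [← hma]; abel
      simpa [astar] using this
end

section
/- Let E be a real inner product space, μ ∈ E, g ∈ E with g ≠ 0, and c, C ∈ ℝ. Define λ* = max 0 ((⟪g, μ⟫ + c − C) / ‖g‖²) and a* = μ − λ* • g. Then (a*, λ*) is a KKT point of the single-constraint safety-layer QP: λ* ≥ 0 (dual feasibility), c + ⟪g, a*⟫ ≤ C (primal feasibility), a* − μ + λ* • g = 0 (stationarity), and λ* · (c + ⟪g, a*⟫ − C) = 0 (complementary slackness). -/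
open scoped RealInnerProductSpace

/-- The closed-form safety-layer solution is a KKT point of the single-constraint QP. -/
theorem safety_layer_closed_form_is_kkt
    {E : Type*} [NormedAddCommGroup E] [InnerProductSpace ℝ E]
    (μ g : E) (hg : g ≠ 0) (c C : ℝ) :
    let lamstar := max 0 ((⟪g, μ⟫ + c - C) / ‖g‖ ^ 2)
    let astar := μ - lamstar • g
    0 ≤ lamstar ∧
    c + ⟪g, astar⟫ ≤ C ∧
    astar - μ + lamstar • g = 0 ∧
    lamstar * (c + ⟪g, astar⟫ - C) = 0 := by
  intro lamstar astar
  have hgn : (0:ℝ) < ‖g‖ ^ 2 := by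
    have := norm_pos_iff.mpr hg
    positivity
  have hip : ⟪g, astar⟫ = ⟪g, μ⟫ - lamstar * ‖g‖ ^ 2 := by
    simp [astar, inner_sub_right, inner_smul_right, real_inner_self_eq_norm_sq]
  have key : c + ⟪g, astar⟫ - C = ⟪g, μ⟫ + c - C - lamstar * ‖g‖ ^ 2 := by
    rw [hip]; ring
  refine ⟨le_max_left _ _, ?_, by simp [astar], ?_⟩
  · rcases le_or_gt (⟪g, μ⟫ + c - C) 0 with h | h
    · have : lamstar = 0 := by
        simp [lamstar, max_eq_left, div_nonpos_of_nonpos_of_nonneg h (le_of_lt hgn)]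
      rw [← sub_nonpos, key, this]; linarith
    · have hl : lamstar = (⟪g, μ⟫ + c - C) / ‖g‖ ^ 2 :=
        max_eq_right (by positivity)
      rw [← sub_nonpos, key, hl, div_mul_cancel₀ _ (ne_of_gt hgn)]; linarith
  · rcases le_or_gt (⟪g, μ⟫ + c - C) 0 with h | h
    · have : lamstar = 0 := by
        simp [lamstar, max_eq_left, div_nonpos_of_nonpos_of_nonneg h (le_of_lt hgn)]
      simp [this]
    · have hl : lamstar = (⟪g, μ⟫ + c - C) / ‖g‖ ^ 2 :=
        max_eq_right (by positivity)
      rw [key, hl, div_mul_cancel₀ _ (ne_of_gt hgn)]; ring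
end

section
/- Let E be a real inner product space, μ ∈ E, g ∈ E with g ≠ 0, and c, C ∈ ℝ. Suppose a* ∈ E satisfies c + ⟪g, a*⟫ ≤ C and ‖a* − μ‖ ≤ ‖a − μ‖ for every a ∈ E with c + ⟪g, a⟫ ≤ C (i.e., a* is a global minimizer of the single-constraint safety-layer QP). Then there exists λ ≥ 0 such that a* − μ + λ • g = 0 and λ · (c + ⟪g, a*⟫ − C) = 0; moreover necessarily λ = max 0 ((⟪g, μ⟫ + c − C)/‖g‖²) and a* = μ − λ • g. -/
/-!
The closed-form point `p = μ - λ • g`, with `λ = [(⟪g, μ⟫ + c - C) / ‖g‖²]⁺`, is feasible, satisfies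
complementary slackness, and obeys the variational inequality `⟪μ - p, a - p⟫ ≤ 0` for every feasible
`a`. By Pythagoras the latter gives `‖a - μ‖² ≥ ‖p - μ‖² + ‖a - p‖²`, so `p` is the unique minimizer
and every minimizer `a*` equals `p`; the KKT conditions are then those of `p`.
-/

open scoped RealInnerProductSpace

section

variable {E : Type*} [NormedAddCommGroup E] [InnerProductSpace ℝ E]

theorem eq_of_inner_sub_nonpos_of_norm_sub_le {μ p a : E} (hvar : ⟪μ - p, a - p⟫ ≤ 0)
    (hle : ‖a - μ‖ ≤ ‖p - μ‖) : a = p := by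
  have hpyth : ‖a - μ‖ ^ 2 = ‖a - p‖ ^ 2 + ‖p - μ‖ ^ 2 - 2 * ⟪μ - p, a - p⟫ := by
    rw [← sub_add_sub_cancel a p μ, norm_add_sq_real, real_inner_comm, ← neg_sub p μ,
      inner_neg_left]
    ring
  have hsq : ‖a - μ‖ ^ 2 ≤ ‖p - μ‖ ^ 2 := pow_le_pow_left₀ (norm_nonneg _) hle 2
  have hdist : ‖a - p‖ ^ 2 ≤ 0 := by linarith
  rw [← sub_eq_zero, ← norm_eq_zero]
  exact pow_eq_zero_iff two_ne_zero |>.mp (le_antisymm hdist (sq_nonneg _))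

namespace SafetyLayer

/-- The multiplier `λ` of the paper's closed form (6). -/
noncomputable def multiplier (μ g : E) (c C : ℝ) : ℝ :=
  max 0 ((⟪g, μ⟫ + c - C) / ‖g‖ ^ 2)

/-- The minimizer `μ - λ • g` of the paper's closed form (7). -/
noncomputable def projection (μ g : E) (c C : ℝ) : E :=
  μ - multiplier μ g c C • g

variable (μ g : E) (c C : ℝ)

theorem multiplier_nonneg : 0 ≤ multiplier μ g c C :=
  le_max_left _ _

theorem multiplier_mul_norm_sq (hg : g ≠ 0) :
    multiplier μ g c C * ‖g‖ ^ 2 = max 0 (⟪g, μ⟫ + c - C) := by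
  have hpos : 0 < ‖g‖ ^ 2 := by positivity
  rw [multiplier, max_mul_of_nonneg _ _ hpos.le, zero_mul, div_mul_cancel₀ _ hpos.ne']

theorem constraint_projection (hg : g ≠ 0) :
    c + ⟪g, projection μ g c C⟫ - C = min (⟪g, μ⟫ + c - C) 0 := by
  rw [projection, inner_sub_right, real_inner_smul_right, real_inner_self_eq_norm_sq,
    multiplier_mul_norm_sq μ g c C hg]
  rcases le_total (⟪g, μ⟫ + c - C) 0 with h | h
  · rw [max_eq_left h, min_eq_left h]; ring
  · rw [max_eq_right h, min_eq_right h]; ring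

theorem projection_feasible (hg : g ≠ 0) : c + ⟪g, projection μ g c C⟫ ≤ C := by
  have := constraint_projection μ g c C hg
  linarith [min_le_right (⟪g, μ⟫ + c - C) 0]

theorem multiplier_mul_constraint_projection (hg : g ≠ 0) :
    multiplier μ g c C * (c + ⟪g, projection μ g c C⟫ - C) = 0 := by
  rw [constraint_projection μ g c C hg]
  rcases le_total (⟪g, μ⟫ + c - C) 0 with h | h
  · have hzero : multiplier μ g c C = 0 :=
      max_eq_left (div_nonpos_of_nonpos_of_nonneg h (sq_nonneg _))
    rw [hzero, zero_mul]
  · rw [min_eq_right h, mul_zero]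

theorem inner_sub_projection_nonpos (hg : g ≠ 0) {a : E} (ha : c + ⟪g, a⟫ ≤ C) :
    ⟪μ - projection μ g c C, a - projection μ g c C⟫ ≤ 0 := by
  have hslack := multiplier_mul_constraint_projection μ g c C hg
  have hinner : ⟪μ - projection μ g c C, a - projection μ g c C⟫ =
      multiplier μ g c C * (c + ⟪g, a⟫ - C) -
        multiplier μ g c C * (c + ⟪g, projection μ g c C⟫ - C) := by
    rw [projection, sub_sub_cancel, real_inner_smul_left, inner_sub_right]
    ring
  rw [hinner, hslack, sub_zero]
  exact mul_nonpos_of_nonneg_of_nonpos (multiplier_nonneg μ g c C) (by linarith)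

end SafetyLayer

end

open SafetyLayer in
/-- Necessity of KKT: any global minimizer of the single-constraint safety-layer QP
admits a Lagrange multiplier satisfying the KKT conditions, and the multiplier and
minimizer are given by the paper's closed-form expressions. -/
theorem safety_layer_kkt_necessary
    {E : Type*} [NormedAddCommGroup E] [InnerProductSpace ℝ E]
    (μ g : E) (hg : g ≠ 0) (c C : ℝ)
    (astar : E)
    (hfeas : c + ⟪g, astar⟫ ≤ C)
    (hmin : ∀ a : E, c + ⟪g, a⟫ ≤ C → ‖astar - μ‖ ≤ ‖a - μ‖) :
    ∃ lam : ℝ, 0 ≤ lam ∧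
      astar - μ + lam • g = 0 ∧
      lam * (c + ⟪g, astar⟫ - C) = 0 ∧
      lam = max 0 ((⟪g, μ⟫ + c - C) / ‖g‖ ^ 2) ∧
      astar = μ - lam • g := by
  have hastar : astar = projection μ g c C :=
    eq_of_inner_sub_nonpos_of_norm_sub_le (inner_sub_projection_nonpos μ g c C hg hfeas)
      (hmin _ (projection_feasible μ g c C hg))
  refine ⟨multiplier μ g c C, multiplier_nonneg μ g c C, ?_, ?_, rfl, hastar⟩
  · rw [hastar, projection]
    abel
  · rw [hastar]
    exact multiplier_mul_constraint_projection μ g c C hg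
end
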